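/- arXiv:2409.06148 — 6 statements merged into one kernel-verified Lean document; each statement's English description precedes it below -/
import Mathlib

section
/- Let G be a finite weighted undirected graph with positive edge weights, partitioned into vertex-disjoint subgraphs G_1,…,G_k with boundary set B (vertices incident to inter-partition edges). Suppose the overlay labels L̃ : B → (V → ℝ∪{∞}) satisfy the 2-hop cover property restricted to pairs of boundary vertices (i.e., for all b, b' ∈ B, d(b,b') = min over common hubs c of L̃(b,c)+L̃(b',c)), and the partition labels L'_i satisfy the 2-hop cover property for all pairs within the extended partition G'_i (whose distances agree with global distances within G_i). Define L* by: L*(v) = L̃(v) for v ∈ B, and for v ∈ G_i \ B, L*(v,c) = min over b ∈ B_i of (d_{L'_i}(v,b) + L̃(b,c)) for hubs c inherited from boundary labels, and L*(v,c) = L'_i(v,c) for remaining in-partition hubs. Then for any two vertices s ∈ G_i, t ∈ G_j with i ≠ j, d_G(s,t) = min over c ∈ L*(s) ∩ L*(t) of (L*(s,c) + L*(t,c)). -/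
/-- Hub set of the cross-boundary index `L*`: a boundary vertex inherits its overlay
hubs `Lt v`; a non-boundary vertex of partition `i` keeps its partition hubs `Lp v`
together with all hubs of all boundary vertices of its partition. -/
def crossHubs {V : Type*} [DecidableEq V] {k : ℕ}
    (part : V → Fin k) (B : Finset V) (Lt Lp : V → Finset V) (v : V) : Finset V :=
  if v ∈ B then Lt v
  else Lp v ∪ (B.filter (fun b => part b = part v)).biUnion Lt

/-- Correctness of the cross-boundary strategy: the cross-boundary index `L*`
(with hub sets `crossHubs` and label values `Lval`) satisfies the 2-hop cover
property for all cross-partition queries: for `s ∈ G_i`, `t ∈ G_j`, `i ≠ j`,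
`d_G(s,t) = min_{c ∈ L*(s) ∩ L*(t)} (L*(s,c) + L*(t,c))`. -/
theorem cross_boundary_two_hop_cover
    {V : Type*} [Fintype V] [DecidableEq V] {k : ℕ}
    (d : V → V → ℝ) (part : V → Fin k) (B : Finset V)
    (hd0 : ∀ v, d v v = 0)
    (hdsymm : ∀ u v, d u v = d v u)
    (hdtri : ∀ u v w, d u w ≤ d u v + d v w)
    -- every cross-partition shortest path passes a boundary vertex of each endpoint's partition
    (hsep : ∀ s t, part s ≠ part t → ∃ b b', b ∈ B ∧ part b = part s ∧
      b' ∈ B ∧ part b' = part t ∧ d s t = d s b + d b b' + d b' t)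
    -- overlay labels on boundary vertices: 2-hop cover restricted to boundary pairs
    (Lt : V → Finset V)
    (hLt : ∀ b ∈ B, ∀ b' ∈ B, ∃ c, c ∈ Lt b ∧ c ∈ Lt b' ∧ d b b' = d b c + d b' c)
    -- partition labels: hubs stay in the partition, 2-hop cover within each (extended) partition
    (Lp : V → Finset V)
    (hLpmem : ∀ v, ∀ c ∈ Lp v, part c = part v)
    (hLp : ∀ s t, part s = part t → ∃ c, c ∈ Lp s ∧ c ∈ Lp t ∧ d s t = d s c + d t c)
    -- cross-boundary label values
    (Lval : V → V → ℝ)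
    (hvalB : ∀ b ∈ B, ∀ c, Lval b c = d b c)
    (hvalNB : ∀ v, v ∉ B →
      ∀ c ∈ (B.filter (fun b => part b = part v)).biUnion Lt,
        IsLeast (↑((B.filter (fun b => part b = part v)).image (fun b => d v b + d b c)) : Set ℝ)
          (Lval v c))
    (hvalNB' : ∀ v, v ∉ B → ∀ c ∈ Lp v,
      c ∉ (B.filter (fun b => part b = part v)).biUnion Lt → Lval v c = d v c) :
    ∀ s t, part s ≠ part t →
      (∀ c, c ∈ crossHubs part B Lt Lp s → c ∈ crossHubs part B Lt Lp t →
        d s t ≤ Lval s c + Lval t c) ∧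
      (∃ c, c ∈ crossHubs part B Lt Lp s ∧ c ∈ crossHubs part B Lt Lp t ∧
        d s t = Lval s c + Lval t c) := by

  have hlow : ∀ v c, c ∈ crossHubs part B Lt Lp v → d v c ≤ Lval v c := by
    intro v c hc
    by_cases hv : v ∈ B
    · rw [hvalB v hv c]
    · simp only [crossHubs, if_neg hv, Finset.mem_union] at hc
      by_cases hcb : c ∈ (B.filter (fun b => part b = part v)).biUnion Lt
      · obtain ⟨hmem, -⟩ := hvalNB v hv c hcb
        simp only [Finset.coe_image, Set.mem_image, Finset.mem_coe,
          Finset.mem_filter] at hmem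
        obtain ⟨b, ⟨hbB, hbp⟩, hval⟩ := hmem
        rw [← hval]
        exact hdtri v b c
      · rcases hc with hc | hc
        · rw [hvalNB' v hv c hc hcb]
        · exact absurd hc hcb
  have hub : ∀ v c b, v ∉ B → b ∈ B → part b = part v → c ∈ Lt b →
      Lval v c ≤ d v b + d b c := by
    intro v c b hv hbB hbp hcb
    have hcmem : c ∈ (B.filter (fun x => part x = part v)).biUnion Lt :=
      Finset.mem_biUnion.mpr ⟨b, Finset.mem_filter.mpr ⟨hbB, hbp⟩, hcb⟩
    obtain ⟨-, hlb⟩ := hvalNB v hv c hcmem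
    apply hlb
    simp only [Finset.coe_image, Set.mem_image, Finset.mem_coe, Finset.mem_filter]
    exact ⟨b, ⟨hbB, hbp⟩, rfl⟩
  intro s t hst
  refine ⟨?_, ?_⟩
  · intro c hcs hct
    calc d s t ≤ d s c + d c t := hdtri s c t
    _ = d s c + d t c := by rw [hdsymm c t]
    _ ≤ Lval s c + Lval t c := add_le_add (hlow s c hcs) (hlow t c hct)
  · obtain ⟨b, b', hbB, hbp, hb'B, hb'p, heq⟩ := hsep s t hst
    by_cases hs : s ∈ B <;> by_cases ht : t ∈ B
    · -- both boundary
      obtain ⟨c, hcs, hct, hc⟩ := hLt s hs t ht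
      refine ⟨c, ?_, ?_, ?_⟩
      · simp [crossHubs, hs, hcs]
      · simp [crossHubs, ht, hct]
      · rw [hvalB s hs c, hvalB t ht c]; exact hc
    · -- s boundary, t not
      obtain ⟨c, hcs, hct, hc⟩ := hLt s hs b' hb'B
      have h1 : Lval t c ≤ d t b' + d b' c := hub t c b' ht hb'B hb'p hct
      have h2 : d s b' ≤ d s b + d b b' := hdtri s b b'
      have h3 : d s t ≤ d s c + d t c := by
        rw [hdsymm t c]; exact hdtri s c t
      have h4 : d s c ≤ Lval s c := hlow s c (by simp [crossHubs, hs, hcs])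
      refine ⟨c, by simp [crossHubs, hs, hcs], ?_, ?_⟩
      · simp only [crossHubs, if_neg ht, Finset.mem_union]
        exact Or.inr (Finset.mem_biUnion.mpr ⟨b', Finset.mem_filter.mpr ⟨hb'B, hb'p⟩, hct⟩)
      · have h5 : Lval s c = d s c := hvalB s hs c
        have h6 : d t b' = d b' t := hdsymm t b'
        have h7 : d t c ≤ Lval t c := hlow t c (by
          simp only [crossHubs, if_neg ht, Finset.mem_union]
          exact Or.inr (Finset.mem_biUnion.mpr ⟨b', Finset.mem_filter.mpr ⟨hb'B, hb'p⟩, hct⟩))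
        linarith
    · -- t boundary, s not
      obtain ⟨c, hcs, hct, hc⟩ := hLt b hbB t ht
      have h1 : Lval s c ≤ d s b + d b c := hub s c b hs hbB hbp hcs
      have h2 : d b t ≤ d b b' + d b' t := hdtri b b' t
      have h3 : d s t ≤ d s c + d t c := by
        rw [hdsymm t c]; exact hdtri s c t
      have h4 : d s c ≤ Lval s c := hlow s c (by
        simp only [crossHubs, if_neg hs, Finset.mem_union]
        exact Or.inr (Finset.mem_biUnion.mpr ⟨b, Finset.mem_filter.mpr ⟨hbB, hbp⟩, hcs⟩))
      have h5 : d t c ≤ Lval t c := hlow t c (by simp [crossHubs, ht, hct])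
      refine ⟨c, ?_, by simp [crossHubs, ht, hct], ?_⟩
      · simp only [crossHubs, if_neg hs, Finset.mem_union]
        exact Or.inr (Finset.mem_biUnion.mpr ⟨b, Finset.mem_filter.mpr ⟨hbB, hbp⟩, hcs⟩)
      · have h6 : Lval t c = d t c := hvalB t ht c
        linarith
    · -- neither boundary
      obtain ⟨c, hcs, hct, hc⟩ := hLt b hbB b' hb'B
      have h1 : Lval s c ≤ d s b + d b c := hub s c b hs hbB hbp hcs
      have h2 : Lval t c ≤ d t b' + d b' c := hub t c b' ht hb'B hb'p hct
      have hms : c ∈ crossHubs part B Lt Lp s := by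
        simp only [crossHubs, if_neg hs, Finset.mem_union]
        exact Or.inr (Finset.mem_biUnion.mpr ⟨b, Finset.mem_filter.mpr ⟨hbB, hbp⟩, hcs⟩)
      have hmt : c ∈ crossHubs part B Lt Lp t := by
        simp only [crossHubs, if_neg ht, Finset.mem_union]
        exact Or.inr (Finset.mem_biUnion.mpr ⟨b', Finset.mem_filter.mpr ⟨hb'B, hb'p⟩, hct⟩)
      have h3 : d s t ≤ d s c + d t c := by
        rw [hdsymm t c]; exact hdtri s c t
      have h4 : d s c ≤ Lval s c := hlow s c hms
      have h5 : d t c ≤ Lval t c := hlow t c hmt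
      have h6 : d t b' = d b' t := hdsymm t b'
      exact ⟨c, hms, hmt, by linarith⟩
end

section
/- Let G be a finite weighted graph partitioned into subgraphs {G_i} with boundary sets {B_i}. If all non-boundary vertices are contracted (iteratively removed, while inserting shortcuts that preserve pairwise distances among remaining neighbors), then for every partition G_i and every pair of boundary vertices s, t ∈ B_i, the distance from s to t in the resulting overlay graph (consisting of boundary vertices, original inter-partition edges, and generated shortcuts) equals d_G(s,t). -/
open scoped ENNReal

/-- Cost of the walk `s :: p ++ [t]`: `p` is the list of intermediate vertices, a missing
edge has weight `⊤`. -/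
noncomputable def pathCost {V : Type*} (w : V → V → ℝ≥0∞) : V → List V → V → ℝ≥0∞
  | s, [], t => w s t
  | s, x :: xs, t => w s x + pathCost w x xs t

/-- Shortest-path distance induced by the weight function `w`. -/
noncomputable def gdist {V : Type*} [DecidableEq V] (w : V → V → ℝ≥0∞) (s t : V) : ℝ≥0∞ :=
  if s = t then 0 else ⨅ p : List V, pathCost w s p t

/-- Contraction of vertex `v`: for each pair of vertices `u, x ≠ v`, the new weight of
edge `(u,x)` is `min (w u x) (w u v + w v x)`; `v` and its incident edges are removed. -/
noncomputable def contractVtx {V : Type*} [DecidableEq V] (w : V → V → ℝ≥0∞) (v : V) :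
    V → V → ℝ≥0∞ :=
  fun u x => if u = v ∨ x = v then ⊤ else min (w u x) (w u v + w v x)

/-!
Contracting a single vertex `v` preserves the distance between any two vertices other than `v`:
a walk of the contracted graph avoids `v`, and each of its edges expands into a walk of length at
most two in the original graph; conversely, deleting every visit of a walk to `v` replaces the two
edges around that visit by a shortcut that is no heavier (several consecutive visits only lose
the nonnegative loop weights `w v v`). Boundary vertices are never contracted, so induction along
the contraction order gives the theorem.
-/

section Contraction

variable {V : Type*} [DecidableEq V] (w : V → V → ℝ≥0∞) {v : V}

theorem contractVtx_of_ne {u x : V} (hu : u ≠ v) (hx : x ≠ v) :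
    contractVtx w v u x = min (w u x) (w u v + w v x) := by
  simp [contractVtx, hu, hx]

theorem pathCost_contractVtx_eq_top_of_mem {s t : V} {p : List V} (hv : v ∈ p) :
    pathCost (contractVtx w v) s p t = ⊤ := by
  induction p generalizing s with
  | nil => simp at hv
  | cons x xs ih =>
    rcases List.mem_cons.mp hv with rfl | hv
    · simp [pathCost, contractVtx]
    · simp [pathCost, ih hv]

-- The second bound, for walks entering `v` right after `s`, is needed to pass through runs of `v`.
theorem pathCost_contractVtx_filter_le {t : V} (ht : t ≠ v) (p : List V) {s : V} (hs : s ≠ v) :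
    pathCost (contractVtx w v) s (p.filter (· ≠ v)) t ≤ pathCost w s p t ∧
      pathCost (contractVtx w v) s (p.filter (· ≠ v)) t ≤ w s v + pathCost w v p t := by
  induction p generalizing s with
  | nil =>
    simp only [List.filter_nil, pathCost, contractVtx_of_ne w hs ht]
    exact ⟨min_le_left _ _, min_le_right _ _⟩
  | cons x xs ih =>
    by_cases hx : x = v
    · subst hx
      rw [List.filter_cons_of_neg (by simp)]
      simp only [pathCost]
      exact ⟨(ih hs).2, (ih hs).2.trans (by gcongr; exact le_add_self)⟩
    · rw [List.filter_cons_of_pos (by simpa using hx)]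
      simp only [pathCost, contractVtx_of_ne w hs hx]
      constructor
      · gcongr
        · exact min_le_left _ _
        · exact (ih hx).1
      · calc min (w s x) (w s v + w v x) + pathCost (contractVtx w v) x (xs.filter (· ≠ v)) t
            ≤ (w s v + w v x) + pathCost w x xs t := by
              gcongr
              · exact min_le_right _ _
              · exact (ih hx).1
          _ = w s v + (w v x + pathCost w x xs t) := add_assoc _ _ _

theorem exists_pathCost_le_pathCost_contractVtx {t : V} (ht : t ≠ v) {p : List V} (hv : v ∉ p)
    {s : V} (hs : s ≠ v) : ∃ q, pathCost w s q t ≤ pathCost (contractVtx w v) s p t := by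
  induction p generalizing s with
  | nil =>
    rcases min_cases (w s t) (w s v + w v t) with ⟨h, _⟩ | ⟨h, _⟩
    · exact ⟨[], by simp [pathCost, contractVtx_of_ne w hs ht, h]⟩
    · exact ⟨[v], by simp [pathCost, contractVtx_of_ne w hs ht, h]⟩
  | cons x xs ih =>
    obtain ⟨hx, hxs⟩ : x ≠ v ∧ v ∉ xs := by simpa [eq_comm] using hv
    obtain ⟨q, hq⟩ := ih hxs hx
    rcases min_cases (w s x) (w s v + w v x) with ⟨h, _⟩ | ⟨h, _⟩
    · refine ⟨x :: q, ?_⟩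
      simp only [pathCost, contractVtx_of_ne w hs hx, h]
      gcongr
    · refine ⟨v :: x :: q, ?_⟩
      simp only [pathCost, contractVtx_of_ne w hs hx, h, ← add_assoc]
      gcongr

theorem gdist_contractVtx {s t : V} (hs : s ≠ v) (ht : t ≠ v) :
    gdist (contractVtx w v) s t = gdist w s t := by
  unfold gdist
  split_ifs
  · rfl
  refine le_antisymm (le_iInf fun p => ?_) (le_iInf fun p => ?_)
  · exact iInf_le_of_le (p.filter (· ≠ v)) (pathCost_contractVtx_filter_le w ht p hs).1
  · by_cases hv : v ∈ p
    · simp [pathCost_contractVtx_eq_top_of_mem w hv]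
    · obtain ⟨q, hq⟩ := exists_pathCost_le_pathCost_contractVtx w ht hv hs
      exact iInf_le_of_le q hq

theorem gdist_foldl_contractVtx {s t : V} {order : List V} (hs : s ∉ order) (ht : t ∉ order) :
    gdist (order.foldl contractVtx w) s t = gdist w s t := by
  induction order generalizing w with
  | nil => rfl
  | cons v rest ih =>
    simp only [List.mem_cons, not_or] at hs ht
    rw [List.foldl_cons, ih _ hs.2 ht.2, gdist_contractVtx w hs.1 ht.1]

end Contraction

theorem overlay_graph_preserves_boundary_distances_general
    {V : Type*} [DecidableEq V] {k : ℕ}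
    (part : V → Fin k) (B : Finset V) (w : V → V → ℝ≥0∞)
    (order : List V)
    -- the contraction order consists of exactly the non-boundary vertices
    (horder : ∀ v, v ∈ order ↔ v ∉ B) :
    ∀ s ∈ B, ∀ t ∈ B, part s = part t →
      gdist (order.foldl contractVtx w) s t = gdist w s t :=
  fun s hs t ht _ =>
    gdist_foldl_contractVtx w (fun h => (horder s).mp h hs) (fun h => (horder t).mp h ht)

/-- Overlay distance preservation: if all non-boundary vertices of a partitioned graph are
iteratively contracted (inserting distance-preserving shortcuts), then for every partition
`G_i` and every pair of boundary vertices `s, t ∈ B_i`, the distance in the resulting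
overlay graph (boundary vertices, original inter-partition edges, and generated shortcuts)
equals `d_G(s,t)`. -/
theorem overlay_graph_preserves_boundary_distances
    {V : Type*} [Fintype V] [DecidableEq V] {k : ℕ}
    (part : V → Fin k) (B : Finset V) (w : V → V → ℝ≥0∞)
    (hsymm : ∀ u x, w u x = w x u)
    (hpos : ∀ u x, u ≠ x → 0 < w u x)
    -- boundary vertices are exactly the vertices incident to inter-partition edges
    (hB : ∀ v, v ∈ B ↔ ∃ u, part u ≠ part v ∧ w v u ≠ ⊤)
    (order : List V) (hnodup : order.Nodup)
    -- the contraction order consists of exactly the non-boundary vertices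
    (horder : ∀ v, v ∈ order ↔ v ∉ B) :
    ∀ s ∈ B, ∀ t ∈ B, part s = part t →
      gdist (order.foldl contractVtx w) s t = gdist w s t :=
  overlay_graph_preserves_boundary_distances_general part B w order horder
end

section
/- Let T be a tree decomposition of graph G obtained by minimum-degree vertex elimination, where each vertex v has bag X(v) = {v} ∪ X(v).N with X(v).N the neighbors of v at contraction time, and the parent of X(v) is the lowest-ranked vertex of X(v).N. Then for every vertex v, X(v).N is a subset of the ancestors of v in T, and X(v).N separates v (together with its descendants in T) from all other vertices of G: every path from a descendant of v (including v) to a non-descendant passes through X(v).N. -/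
/-!
Write `p` for the parent map. If `u ∈ N v` and `u ≠ p v`, then `u` outranks `p v`, the
lowest-ranked vertex of `N v`, so the fill-in created by contracting `v` puts `u` into `N (p v)`.
Climbing the tree from `v` therefore keeps `u` a contraction-time neighbour until `u` is reached
as a parent (ranks increase strictly, so this ends); hence `N v` consists of ancestors of `v`.
Climbing from any descendant `a` of `v` in the same way, a neighbour of `a` in `N a` either turns
up as an ancestor of `a` below or at `v`, i.e. a descendant of `v`, or lies in `N v`.
So for an edge `a b` of `G` with `a` a descendant of `v` and `b` not: if `b` outranks `a`, then
`b ∈ N a` and hence `b ∈ N v`; if `a` outranks `b`, then `a ∈ N b`, making `b` an ancestor of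
`a` and so a descendant of `v`, which is impossible. A path leaving the descendants of `v`
crosses such an edge.
-/

open Relation

theorem List.exists_mem_of_isChain_of_crossing {α : Type*} {R : α → α → Prop}
    {P S : α → Prop} (hcross : ∀ a b, R a b → P a → ¬ P b → S b) :
    ∀ (s t : α) (p : List α), P s → ¬ P t → List.IsChain R (s :: p ++ [t]) →
      ∃ b ∈ s :: p ++ [t], S b := by
  intro s t p
  induction p generalizing s with
  | nil =>
    intro hs ht hchain
    exact ⟨t, by simp, hcross s t (List.isChain_pair.1 hchain) hs ht⟩
  | cons x p ih =>
    intro hs ht hchain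
    have hsx : R s x := (List.isChain_cons_cons.1 hchain).1
    by_cases hx : P x
    · obtain ⟨b, hb, hSb⟩ := ih x hx ht hchain.tail
      exact ⟨b, List.mem_cons_of_mem s hb, hSb⟩
    · exact ⟨x, by simp, hcross s x hsx hs hx⟩

/-- `ReflTransGen (ParentRel root parent) x v` says that `x` is a descendant of `v`. -/
def ParentRel {V : Type*} (root : V) (parent : V → V) (a b : V) : Prop :=
  a ≠ root ∧ b = parent a

structure IsEliminationTree {V : Type*} (r : V → ℕ) (N : V → Finset V) (root : V)
    (parent : V → V) : Prop where
  injective : Function.Injective r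
  rank_lt_of_mem : ∀ v, ∀ u ∈ N v, r v < r u
  mem_of_fill : ∀ v, ∀ u ∈ N v, ∀ x ∈ N v, u ≠ x → r u < r x → x ∈ N u
  neighbors_root : N root = ∅
  parent_spec : ∀ v, v ≠ root → parent v ∈ N v ∧ ∀ u ∈ N v, r (parent v) ≤ r u

namespace IsEliminationTree

variable {V : Type*} {r : V → ℕ} {N : V → Finset V} {root : V} {parent : V → V} {u v : V}

theorem ne_root_of_mem (h : IsEliminationTree r N root parent) (hu : u ∈ N v) : v ≠ root := by
  rintro rfl
  simp [h.neighbors_root] at hu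

theorem parent_mem (h : IsEliminationTree r N root parent) (hu : u ∈ N v) :
    parent v ∈ N v :=
  (h.parent_spec v (h.ne_root_of_mem hu)).1

theorem rank_parent_lt (h : IsEliminationTree r N root parent) (hu : u ∈ N v)
    (hne : u ≠ parent v) : r (parent v) < r u :=
  ((h.parent_spec v (h.ne_root_of_mem hu)).2 u hu).lt_of_ne fun hr => hne (h.injective hr).symm

theorem mem_parent_of_mem (h : IsEliminationTree r N root parent) (hu : u ∈ N v)
    (hne : u ≠ parent v) : u ∈ N (parent v) :=
  h.mem_of_fill v _ (h.parent_mem hu) u hu (Ne.symm hne) (h.rank_parent_lt hu hne)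

theorem transGen_of_mem (h : IsEliminationTree r N root parent) {u v : V} (hu : u ∈ N v) :
    TransGen (ParentRel root parent) v u := by
  have hv := h.ne_root_of_mem hu
  by_cases hne : u = parent v
  · exact .single ⟨hv, hne⟩
  · have hu' := h.mem_parent_of_mem hu hne
    have : r v < r (parent v) := h.rank_lt_of_mem v _ (h.parent_mem hu)
    have : r (parent v) < r u := h.rank_lt_of_mem _ u hu'
    exact .head ⟨hv, rfl⟩ (h.transGen_of_mem hu')
termination_by r u - r v

theorem reflTransGen_or_mem_of_mem (h : IsEliminationTree r N root parent) {a : V}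
    (ha : ReflTransGen (ParentRel root parent) a v) (hu : u ∈ N a) :
    ReflTransGen (ParentRel root parent) u v ∨ u ∈ N v := by
  induction ha using ReflTransGen.head_induction_on generalizing u with
  | refl => exact .inr hu
  | @head a c hac hcv ih =>
    obtain ⟨-, rfl⟩ := hac
    by_cases hne : u = parent a
    · exact .inl (hne ▸ hcv)
    · exact ih (h.mem_parent_of_mem hu hne)

theorem mem_of_adj_of_reflTransGen (h : IsEliminationTree r N root parent)
    {adj : V → V → Prop} (hsymm : ∀ u x, adj u x → adj x u)
    (horig : ∀ u x, adj u x → r u < r x → x ∈ N u) {a b : V} (hab : adj a b)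
    (ha : ReflTransGen (ParentRel root parent) a v)
    (hb : ¬ ReflTransGen (ParentRel root parent) b v) : b ∈ N v := by
  have hr : r a ≠ r b := fun hr => hb (h.injective hr ▸ ha)
  rcases hr.lt_or_gt with hlt | hlt
  · exact (h.reflTransGen_or_mem_of_mem ha (horig a b hab hlt)).resolve_left hb
  · exact absurd ((h.transGen_of_mem (horig b a (hsymm a b hab) hlt)).to_reflTransGen.trans ha) hb

end IsEliminationTree

theorem elimination_tree_neighbors_are_ancestors_and_separate_general
    {V : Type*} (adj : V → V → Prop) (r : V → ℕ)
    (hinj : Function.Injective r)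
    (hadjsymm : ∀ u x, adj u x → adj x u)
    (N : V → Finset V) (root : V) (parent : V → V)
    -- contraction-time neighbors have higher rank
    (hup : ∀ v, ∀ u ∈ N v, r v < r u)
    -- original edges: a neighbor of higher rank is a contraction-time neighbor
    (horig : ∀ u x, adj u x → r u < r x → x ∈ N u)
    -- fill-in edges created by contracting `v` among its neighbors
    (hfill : ∀ v, ∀ u ∈ N v, ∀ x ∈ N v, u ≠ x → r u < r x → x ∈ N u)
    -- the root is the last contracted vertex and has no contraction-time neighbors
    (hroot : N root = ∅)
    -- the parent of `v` is the lowest-ranked vertex of `N v`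
    (hparent : ∀ v, v ≠ root → parent v ∈ N v ∧ ∀ u ∈ N v, r (parent v) ≤ r u) :
    (∀ v, ∀ u ∈ N v,
      Relation.TransGen (fun a b => a ≠ root ∧ b = parent a) v u) ∧
    (∀ v s t (p : List V),
      (s = v ∨ Relation.TransGen (fun a b => a ≠ root ∧ b = parent a) s v) →
      ¬ (t = v ∨ Relation.TransGen (fun a b => a ≠ root ∧ b = parent a) t v) →
      List.Chain' adj (s :: p ++ [t]) →
      ∃ b ∈ s :: p ++ [t], b ∈ N v) := by
  have h : IsEliminationTree r N root parent := ⟨hinj, hup, hfill, hroot, hparent⟩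
  have descendant_iff : ∀ x v, (x = v ∨ TransGen (ParentRel root parent) x v) ↔
      ReflTransGen (ParentRel root parent) x v := fun x v => by
    rw [reflTransGen_iff_eq_or_transGen, eq_comm]
  refine ⟨fun v u hu => h.transGen_of_mem hu, fun v => ?_⟩
  refine List.exists_mem_of_isChain_of_crossing fun a b hab ha hb => ?_
  exact h.mem_of_adj_of_reflTransGen hadjsymm horig hab ((descendant_iff a v).1 ha)
    (mt (descendant_iff b v).2 hb)

/-- Separator property of elimination-based tree decompositions: if vertices are contracted
in increasing rank order (with `N v` the neighbor set of `v` at contraction time, satisfying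
the original-edge and fill-in properties) and the parent of `X(v)` is the lowest-ranked
vertex of `N v`, then for every vertex `v`: (1) `N v` is a subset of the ancestors of `v`
in the tree, and (2) `N v` separates `v` together with its descendants from all other
vertices of `G`: every path from a descendant of `v` (including `v`) to a non-descendant
passes through `N v`. -/
theorem elimination_tree_neighbors_are_ancestors_and_separate
    {V : Type*} [DecidableEq V] (adj : V → V → Prop) (r : V → ℕ)
    (hinj : Function.Injective r)
    (hadjsymm : ∀ u x, adj u x → adj x u)
    (N : V → Finset V) (root : V) (parent : V → V)
    -- contraction-time neighbors have higher rank
    (hup : ∀ v, ∀ u ∈ N v, r v < r u)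
    -- original edges: a neighbor of higher rank is a contraction-time neighbor
    (horig : ∀ u x, adj u x → r u < r x → x ∈ N u)
    -- fill-in edges created by contracting `v` among its neighbors
    (hfill : ∀ v, ∀ u ∈ N v, ∀ x ∈ N v, u ≠ x → r u < r x → x ∈ N u)
    -- the root is the last contracted vertex and has no contraction-time neighbors
    (hroot : N root = ∅)
    -- the parent of `v` is the lowest-ranked vertex of `N v`
    (hparent : ∀ v, v ≠ root → parent v ∈ N v ∧ ∀ u ∈ N v, r (parent v) ≤ r u) :
    (∀ v, ∀ u ∈ N v,
      Relation.TransGen (fun a b => a ≠ root ∧ b = parent a) v u) ∧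
    (∀ v s t (p : List V),
      (s = v ∨ Relation.TransGen (fun a b => a ≠ root ∧ b = parent a) s v) →
      ¬ (t = v ∨ Relation.TransGen (fun a b => a ≠ root ∧ b = parent a) t v) →
      List.Chain' adj (s :: p ++ [t]) →
      ∃ b ∈ s :: p ++ [t], b ∈ N v) :=
  elimination_tree_neighbors_are_ancestors_and_separate_general adj r hinj hadjsymm N root parent
    hup horig hfill hroot hparent
end

section
/- In the H2H index built on a tree decomposition T, for any two vertices s and t whose tree nodes are not in ancestor–descendant relation, let X be their lowest common ancestor. Then d_G(s,t) = min over positions i ∈ X.pos of (X(s).dis[i] + X(t).dis[i]), i.e., the vertices of the LCA bag (equivalently, the set indexed by X.pos, a subset of common ancestors) form a vertex separator between s and t, and exactly one of them lies on a shortest s–t path. -/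
/-!
Every walk of finite cost from `s` to `t` passes through the separating bag, so it splits at a
bag vertex `b` into a walk `s ⤳ b` and a walk `b ⤳ t`, and its cost is at least
`d(s, b) + d(b, t)`; the triangle inequality gives the reverse bound. The bag being finite and
nonempty, the infimum over it is a minimum.
-/

open scoped ENNReal

section

variable {V : Type*} (w : V → V → ℝ≥0∞)

theorem pathCost_append (s b t : V) (p q : List V) :
    pathCost w s (p ++ b :: q) t = pathCost w s p b + pathCost w b q t := by
  induction p generalizing s with
  | nil => rfl
  | cons x xs ih => simp only [List.cons_append, pathCost, ih, add_assoc]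

variable [DecidableEq V]

theorem gdist_le_pathCost (s t : V) (p : List V) : gdist w s t ≤ pathCost w s p t := by
  unfold gdist
  split
  · exact zero_le
  · exact iInf_le _ p

theorem gdist_of_ne {s t : V} (h : s ≠ t) : gdist w s t = ⨅ p, pathCost w s p t :=
  if_neg h

theorem gdist_triangle (s b t : V) : gdist w s t ≤ gdist w s b + gdist w b t := by
  rcases eq_or_ne s b with rfl | hsb
  · simp [gdist]
  rcases eq_or_ne b t with rfl | hbt
  · simp [gdist]
  rw [gdist_of_ne w hsb, gdist_of_ne w hbt]
  exact ENNReal.le_iInf_add_iInf fun p q =>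
    pathCost_append w s b t p q ▸ gdist_le_pathCost w s t _

theorem gdist_eq_biInf_of_separates {s t : V} {S : Set V} (hst : s ≠ t)
    (hsep : ∀ p : List V, pathCost w s p t ≠ ⊤ → ∃ b ∈ p, b ∈ S) :
    gdist w s t = ⨅ b ∈ S, gdist w s b + gdist w b t := by
  refine le_antisymm (le_iInf₂ fun b _ => gdist_triangle w s b t) ?_
  rw [gdist_of_ne w hst]
  refine le_iInf fun p => ?_
  rcases eq_or_ne (pathCost w s p t) ⊤ with hp | hp
  · exact hp ▸ le_top
  obtain ⟨b, hbp, hbS⟩ := hsep p hp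
  obtain ⟨p₁, p₂, rfl⟩ := List.append_of_mem hbp
  calc ⨅ b ∈ S, gdist w s b + gdist w b t
      ≤ gdist w s b + gdist w b t := iInf₂_le b hbS
    _ ≤ pathCost w s p₁ b + pathCost w b p₂ t :=
        add_le_add (gdist_le_pathCost w s b p₁) (gdist_le_pathCost w b t p₂)
    _ = pathCost w s (p₁ ++ b :: p₂) t := (pathCost_append w s b t p₁ p₂).symm

end

theorem h2h_lca_bag_query_correctness_general
    {V : Type*} [DecidableEq V] (w : V → V → ℝ≥0∞)
    (s t : V) (bag : Finset V) (hne : bag.Nonempty)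
    (hst : s ≠ t)
    -- the LCA bag separates s from t: every walk from s to t passes through the bag
    (hsep : ∀ p : List V, pathCost w s p t ≠ ⊤ → ∃ b ∈ p, b ∈ bag) :
    (gdist w s t = ⨅ b ∈ (bag : Set V), gdist w s b + gdist w b t) ∧
    (∃ b ∈ bag, gdist w s t = gdist w s b + gdist w b t) := by
  have hquery := gdist_eq_biInf_of_separates w (S := bag) hst hsep
  refine ⟨hquery, ?_⟩
  obtain ⟨b, hb, hmin⟩ := Finset.mem_image.mp <|
    bag.ciInf_mem_image (fun b => gdist w s b + gdist w b t)
      (hne.exists_mem.imp fun _ hb => ⟨hb, by simp⟩)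
  exact ⟨b, hb, hquery.trans hmin.symm⟩

/-- H2H query correctness: if the bag of the LCA of two (non-ancestor-descendant) tree nodes
`X(s)`, `X(t)` separates `s` from `t` in `G`, then
`d_G(s,t) = min over bag vertices c of (d_G(s,c) + d_G(c,t))` — i.e. the minimum over the
positions indexed by `X.pos` of `X(s).dis[i] + X(t).dis[i]` — and some vertex of the bag
lies on a shortest `s`–`t` path (the minimum is attained). -/
theorem h2h_lca_bag_query_correctness
    {V : Type*} [Fintype V] [DecidableEq V] (w : V → V → ℝ≥0∞)
    (hsymm : ∀ u v, w u v = w v u)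
    (s t : V) (bag : Finset V) (hne : bag.Nonempty)
    (hst : s ≠ t) (hs : s ∉ bag) (ht : t ∉ bag)
    -- the LCA bag separates s from t: every walk from s to t passes through the bag
    (hsep : ∀ p : List V, pathCost w s p t ≠ ⊤ → ∃ b ∈ p, b ∈ bag) :
    (gdist w s t = ⨅ b ∈ (bag : Set V), gdist w s b + gdist w b t) ∧
    (∃ b ∈ bag, gdist w s t = gdist w s b + gdist w b t) :=
  h2h_lca_bag_query_correctness_general w s t bag hne hst hsep
end

section
/- In a canonical 2-hop labeling with respect to a total order r on a finite weighted graph, for every pair of vertices s, t there exists a common hub c ∈ L(s) ∩ L(t) with d(s,c)+d(c,t) = d(s,t); namely, the highest-ranked vertex on any shortest s–t path serves as such a hub. Hence the canonical labeling satisfies the 2-hop cover property. -/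
open scoped ENNReal

/-- `u` is a hub of `v` in the canonical 2-hop labeling w.r.t. rank `r`: either `u = v`, or
`r u ≥ r v` and `u` is the maximum-rank vertex on some shortest path between `v` and `u`
(the intermediate vertices of that shortest path all have rank at most `r u`). -/
def canonicalHub {V : Type*} [DecidableEq V] (w : V → V → ℝ≥0∞) (r : V → ℕ) (v u : V) :
    Prop :=
  u = v ∨ (r v ≤ r u ∧ ∃ p : List V, pathCost w v p u = gdist w v u ∧
    gdist w v u ≠ ⊤ ∧ ∀ x ∈ p, r x ≤ r u)

/-!
Let `c` be the highest-ranked vertex on a shortest `s`–`t` path. The two pieces of the path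
on either side of `c` are shortest paths themselves: otherwise replacing one of them by a
shorter path would shorten the whole path. Every vertex of these pieces has rank at most
`r c`, so they witness `c ∈ L(s)` and `c ∈ L(t)`, and `d(s,c) + d(c,t) = d(s,t)`.
-/

namespace CanonicalLabeling

variable {V : Type*} {w : V → V → ℝ≥0∞}

theorem pathCost_append (a : List V) (s x : V) (b : List V) (t : V) :
    pathCost w s (a ++ x :: b) t = pathCost w s a x + pathCost w x b t := by
  induction a generalizing s with
  | nil => rfl
  | cons y ys ih => simp only [List.cons_append, pathCost, ih, add_assoc]

theorem pathCost_reverse (hsymm : ∀ u v, w u v = w v u) (p : List V) (s t : V) :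
    pathCost w s p t = pathCost w t p.reverse s := by
  induction p generalizing s with
  | nil => exact hsymm s t
  | cons x xs ih =>
    rw [List.reverse_cons, pathCost_append, ← ih, pathCost, pathCost, hsymm x s, add_comm]

theorem exists_nodup_pathCost_le (p : List V) (s t : V) :
    ∃ q : List V, q.Nodup ∧ pathCost w s q t ≤ pathCost w s p t := by
  classical
  induction p generalizing s with
  | nil => exact ⟨[], List.nodup_nil, le_rfl⟩
  | cons x xs ih =>
    obtain ⟨q, hq, hle⟩ := ih x
    by_cases hx : x ∈ q
    · obtain ⟨a, b, rfl⟩ := List.append_of_mem hx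
      refine ⟨x :: b, (List.nodup_append.mp hq).2.1, ?_⟩
      rw [pathCost_append] at hle
      calc pathCost w s (x :: b) t = w s x + pathCost w x b t := rfl
        _ ≤ w s x + (pathCost w x a x + pathCost w x b t) := by gcongr; exact le_add_self
        _ ≤ w s x + pathCost w x xs t := by gcongr
    · exact ⟨x :: q, List.nodup_cons.mpr ⟨hx, hq⟩, add_le_add_right hle _⟩

variable [DecidableEq V]

theorem gdist_self (v : V) : gdist w v v = 0 := if_pos rfl

theorem gdist_le_pathCost (s t : V) (p : List V) : gdist w s t ≤ pathCost w s p t := by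
  unfold gdist
  split
  · exact zero_le
  · exact iInf_le _ p

theorem gdist_comm (hsymm : ∀ u v, w u v = w v u) (s t : V) : gdist w s t = gdist w t s := by
  have hle : ∀ a b : V, (⨅ p, pathCost w a p b) ≤ ⨅ p, pathCost w b p a := fun a b =>
    le_iInf fun p => (pathCost_reverse hsymm p b a).symm ▸ iInf_le _ p.reverse
  unfold gdist
  by_cases h : s = t
  · simp [h]
  · rw [if_neg h, if_neg (Ne.symm h)]
    exact le_antisymm (hle s t) (hle t s)

theorem gdist_triangle (s c t : V) : gdist w s t ≤ gdist w s c + gdist w c t := by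
  by_cases hsc : s = c
  · rw [hsc, gdist_self, zero_add]
  by_cases hct : c = t
  · rw [hct, gdist_self, add_zero]
  unfold gdist
  rw [if_neg hsc, if_neg hct]
  refine ENNReal.le_iInf_add_iInf fun p q => ?_
  rw [← pathCost_append]
  exact gdist_le_pathCost s t _

theorem exists_pathCost_eq_gdist [Fintype V] {s t : V} (h : s ≠ t) :
    ∃ p : List V, pathCost w s p t = gdist w s t := by
  -- the minimum over the finitely many simple walks is also the minimum over all walks
  obtain ⟨q, -, hq⟩ := Finset.exists_min_image (Finset.univ : Finset {l : List V // l.Nodup})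
    (fun l => pathCost w s l.1 t) ⟨⟨[], List.nodup_nil⟩, Finset.mem_univ _⟩
  refine ⟨q.1, le_antisymm ?_ (gdist_le_pathCost s t q.1)⟩
  unfold gdist
  rw [if_neg h]
  refine le_iInf fun p => ?_
  obtain ⟨q', hnd, hle⟩ := exists_nodup_pathCost_le p s t
  exact (hq ⟨q', hnd⟩ (Finset.mem_univ _)).trans hle

theorem pathCost_eq_gdist_of_append {s c t : V} {a b : List V}
    (hp : pathCost w s (a ++ c :: b) t = gdist w s t) (hfin : gdist w s t ≠ ⊤) :
    pathCost w s a c = gdist w s c ∧ pathCost w c b t = gdist w c t := by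
  rw [pathCost_append] at hp
  have hsplit : pathCost w s a c + pathCost w c b t ≤ gdist w s c + gdist w c t :=
    hp ▸ gdist_triangle s c t
  have ha : pathCost w s a c ≠ ⊤ := fun h => hfin (by simp [← hp, h])
  have hb : pathCost w c b t ≠ ⊤ := fun h => hfin (by simp [← hp, h])
  have hac := gdist_le_pathCost (w := w) s c a
  have hbt := gdist_le_pathCost (w := w) c t b
  refine ⟨le_antisymm ?_ hac, le_antisymm ?_ hbt⟩
  · exact ENNReal.le_of_add_le_add_right hb (hsplit.trans (by gcongr))
  · exact ENNReal.le_of_add_le_add_left ha (hsplit.trans (by gcongr))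

theorem exists_shortest_prefix {s c t : V} {p : List V}
    (hp : pathCost w s p t = gdist w s t) (hfin : gdist w s t ≠ ⊤) (hc : c ∈ p ++ [t]) :
    ∃ a : List V, (∀ x ∈ a, x ∈ p) ∧ pathCost w s a c = gdist w s c ∧
      gdist w s c + gdist w c t = gdist w s t := by
  rcases List.mem_append.mp hc with hcp | hct
  · obtain ⟨a, b, rfl⟩ := List.append_of_mem hcp
    obtain ⟨ha, hb⟩ := pathCost_eq_gdist_of_append hp hfin
    refine ⟨a, fun x hx => List.mem_append_left _ hx, ha, ?_⟩
    rw [← ha, ← hb, ← pathCost_append, hp]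
  · obtain rfl := List.mem_singleton.mp hct
    exact ⟨p, fun _ => id, hp, by rw [gdist_self, add_zero]⟩

theorem canonicalHub_of_max_rank_on_shortest {r : V → ℕ} {s c t : V} {p : List V}
    (hp : pathCost w s p t = gdist w s t) (hfin : gdist w s t ≠ ⊤) (hc : c ∈ s :: p ++ [t])
    (hmax : ∀ x ∈ s :: p ++ [t], r x ≤ r c) :
    canonicalHub w r s c ∧ gdist w s c + gdist w c t = gdist w s t := by
  rcases List.mem_cons.mp hc with rfl | hc
  · exact ⟨Or.inl rfl, by rw [gdist_self, zero_add]⟩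
  obtain ⟨a, hap, ha, hsct⟩ := exists_shortest_prefix hp hfin hc
  have hsc : gdist w s c ≠ ⊤ := fun h => hfin (by simp [← hsct, h])
  refine ⟨Or.inr ⟨hmax s (by simp), a, ha, hsc, fun x hx => hmax x ?_⟩, hsct⟩
  simp [hap x hx]

end CanonicalLabeling

open CanonicalLabeling in
theorem canonical_labeling_two_hop_cover_general
    {V : Type*} [Fintype V] [DecidableEq V]
    (w : V → V → ℝ≥0∞) (r : V → ℕ)
    (hsymm : ∀ u v, w u v = w v u)
    -- connectivity
    (hconn : ∀ s t : V, gdist w s t ≠ ⊤) :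
    ∀ s t : V, ∃ c, canonicalHub w r s c ∧ canonicalHub w r t c ∧
      gdist w s c + gdist w c t = gdist w s t := by
  intro s t
  by_cases hst : s = t
  · exact ⟨s, Or.inl rfl, hst ▸ Or.inl rfl, by rw [gdist_self, zero_add]⟩
  obtain ⟨p, hp⟩ := exists_pathCost_eq_gdist (w := w) hst
  obtain ⟨c, hc, hmax⟩ := (s :: p ++ [t]).toFinset.exists_max_image r ⟨s, by simp⟩
  simp only [List.mem_toFinset] at hc hmax
  have hp' : pathCost w t p.reverse s = gdist w t s := by
    rw [← pathCost_reverse hsymm, hp, gdist_comm hsymm]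
  have hmem : ∀ x, x ∈ t :: p.reverse ++ [s] ↔ x ∈ s :: p ++ [t] := by
    simp only [List.cons_append, List.mem_cons, List.mem_append, List.mem_reverse]
    tauto
  obtain ⟨hs, hsct⟩ := canonicalHub_of_max_rank_on_shortest hp (hconn s t) hc hmax
  obtain ⟨ht, -⟩ := canonicalHub_of_max_rank_on_shortest hp' (hconn t s) ((hmem c).mpr hc)
    fun x hx => hmax x ((hmem x).mp hx)
  exact ⟨c, hs, ht, hsct⟩

/-- The canonical 2-hop labeling satisfies the 2-hop cover property: for every pair of
vertices `s, t` of a finite connected positively-weighted graph there is a common hub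
`c ∈ L(s) ∩ L(t)` with `d(s,c) + d(c,t) = d(s,t)` — namely the highest-ranked vertex on a
shortest `s`–`t` path. -/
theorem canonical_labeling_two_hop_cover
    {V : Type*} [Fintype V] [DecidableEq V]
    (w : V → V → ℝ≥0∞) (r : V → ℕ)
    (hinj : Function.Injective r)
    (hsymm : ∀ u v, w u v = w v u)
    (hpos : ∀ u v, u ≠ v → 0 < w u v)
    -- connectivity
    (hconn : ∀ s t : V, gdist w s t ≠ ⊤) :
    ∀ s t : V, ∃ c, canonicalHub w r s c ∧ canonicalHub w r t c ∧
      gdist w s c + gdist w c t = gdist w s t :=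
  canonical_labeling_two_hop_cover_general w r hsymm hconn
end

section
/- Distance array correctness under separator-based top-down construction: let T be a rooted tree over the vertices of a weighted graph G such that for every vertex v, a designated neighbor set N(v) ⊆ ancestors_T(v) separates v from all non-descendants, and shortcut weights satisfy |sc(v,u)| = length of a shortest v–u path internal to lower-ranked vertices (so min over u∈N(v) of |sc(v,u)| + d(u,a) computes d(v,a) for any ancestor a). If distance labels are computed top-down by X(v).dis[a] = min_{u ∈ N(v)} ( |sc(v,u)| + X(u).dis[a] ) for each ancestor a of v (with X(u).dis[a] interpreted as d(u,a), available since u is processed before v), then X(v).dis[a] = d_G(v,a) for all v and all ancestors a. -/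
open scoped ENNReal

/-!
For `a` an ancestor of `v`, every walk from `v` to `a` leaves the vertices ranked below `v`
for the first time at a vertex `b`; if `b = v` the walk can be shortened, and otherwise the
separation property puts `b` in `N v`, so the walk costs at least `sc v b + d(b, a)`. Together
with the triangle inequality this gives `d(v, a) = min_{u ∈ N v} (sc v u + d(u, a))`, and the
labels `X u a` for `u ∈ N v` are correct by induction along the ancestor relation (using
symmetry when `u` lies above `a`).
-/

namespace TopDownLabels

variable {V : Type*} (w : V → V → ℝ≥0∞)

theorem pathCost_append (s : V) (p : List V) (x : V) (q : List V) (t : V) :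
    pathCost w s (p ++ x :: q) t = pathCost w s p x + pathCost w x q t := by
  induction p generalizing s with
  | nil => rfl
  | cons y ys ih => simp only [List.cons_append, pathCost, ih, add_assoc]

theorem pathCost_reverse (hsymm : ∀ u v, w u v = w v u) (s : V) (p : List V) (t : V) :
    pathCost w s p t = pathCost w t p.reverse s := by
  induction p generalizing s with
  | nil => exact hsymm s t
  | cons y ys ih =>
    rw [List.reverse_cons, pathCost_append, ← ih]
    simp only [pathCost]
    rw [hsymm s y, add_comm]

noncomputable def shortcutDist (r : V → ℕ) (v u : V) : ℝ≥0∞ :=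
  ⨅ (p : List V), ⨅ (_ : ∀ x ∈ p, r x < r v), pathCost w v p u

theorem wellFounded_of_rank_lt [Finite V] {R : V → V → Prop} (r : V → ℕ)
    (h : ∀ u v, R u v → r v < r u) : WellFounded R :=
  have : IsTrans V (fun u v => r v < r u) := ⟨fun _ _ _ h₁ h₂ => h₂.trans h₁⟩
  have : Std.Irrefl (fun u v : V => r v < r u) := ⟨fun _ => lt_irrefl _⟩
  Subrelation.wf (h _ _) (Finite.wellFounded_of_trans_of_irrefl _)

variable [DecidableEq V]

@[simp]
theorem gdist_self (s : V) : gdist w s s = 0 := if_pos rfl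

theorem gdist_of_ne {s t : V} (h : s ≠ t) : gdist w s t = ⨅ p : List V, pathCost w s p t :=
  if_neg h

theorem gdist_le_pathCost (s : V) (p : List V) (t : V) : gdist w s t ≤ pathCost w s p t := by
  by_cases h : s = t
  · simp [h]
  · exact (gdist_of_ne w h).symm ▸ iInf_le _ p

theorem gdist_comm (hsymm : ∀ u v, w u v = w v u) (s t : V) : gdist w s t = gdist w t s := by
  have key : ∀ s t : V, gdist w s t ≤ gdist w t s := by
    intro s t
    by_cases h : t = s
    · simp [h]
    · rw [gdist_of_ne w h]
      exact le_iInf fun q => pathCost_reverse w hsymm t q s ▸ gdist_le_pathCost w s _ t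
  exact (key s t).antisymm (key t s)

theorem gdist_triangle (s u t : V) : gdist w s t ≤ gdist w s u + gdist w u t := by
  by_cases hsu : s = u
  · simp [hsu]
  by_cases hut : u = t
  · simp [hut]
  rw [gdist_of_ne w hsu, gdist_of_ne w hut, ENNReal.iInf_add]
  refine le_iInf fun p => ?_
  rw [ENNReal.add_iInf]
  exact le_iInf fun q => pathCost_append w s p u q t ▸ gdist_le_pathCost w s _ t

theorem gdist_le_shortcutDist (r : V → ℕ) (v u : V) : gdist w v u ≤ shortcutDist w r v u :=
  le_iInf₂ fun p _ => gdist_le_pathCost w v p u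

section Separator

variable {w} {r : V → ℕ} {S : Set V} {v : V}
  (hS : ∀ u ∈ S, r v ≤ r u)
  (hsep : ∀ b, b ≠ v → ¬ r b < r v → ∀ p : List V,
    pathCost w v p b ≠ ⊤ → ∃ c ∈ p ++ [b], c ∈ S)
include hS hsep

/-- Separation puts `b` itself in `S`, since the vertices of `pre` rank below all of `S`. -/
theorem iInf_shortcutDist_add_le_pathCost_add (a : V) {pre : List V} {b : V}
    (hpre : ∀ x ∈ pre, r x < r v) (hbv : b ≠ v) (hb : ¬ r b < r v) :
    ⨅ u ∈ S, shortcutDist w r v u + gdist w u a ≤ pathCost w v pre b + gdist w b a := by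
  by_cases htop : pathCost w v pre b = ⊤
  · simp [htop]
  obtain ⟨c, hc, hcS⟩ := hsep b hbv hb pre htop
  obtain rfl : c = b := by
    rcases List.mem_append.mp hc with hc | hc
    · exact absurd (hS c hcS) (not_le.mpr (hpre c hc))
    · exact List.mem_singleton.mp hc
  exact (iInf₂_le c hcS).trans (add_le_add (iInf₂_le pre hpre) le_rfl)

theorem iInf_shortcutDist_add_gdist_le_pathCost {a : V} (hav : a ≠ v) (ha : ¬ r a < r v)
    (p : List V) : ⨅ u ∈ S, shortcutDist w r v u + gdist w u a ≤ pathCost w v p a := by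
  suffices ∀ pre, (∀ x ∈ pre, r x < r v) →
      ⨅ u ∈ S, shortcutDist w r v u + gdist w u a ≤ pathCost w v (pre ++ p) a from
    this [] (by simp)
  induction p with
  | nil =>
    intro pre hpre
    simpa using iInf_shortcutDist_add_le_pathCost_add hS hsep a hpre hav ha
  | cons x xs ih =>
    intro pre hpre
    by_cases hx : r x < r v
    · simpa using ih (pre ++ [x]) (by simpa [or_imp, forall_and] using ⟨hpre, hx⟩)
    rw [pathCost_append]
    by_cases hxv : x = v
    · subst hxv
      exact (ih [] (by simp)).trans le_add_self
    · exact (iInf_shortcutDist_add_le_pathCost_add hS hsep a hpre hxv hx).trans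
        (add_le_add le_rfl (gdist_le_pathCost w x xs a))

theorem gdist_eq_iInf_shortcutDist_add_gdist {a : V} (hav : a ≠ v) (ha : ¬ r a < r v) :
    gdist w v a = ⨅ u ∈ S, shortcutDist w r v u + gdist w u a := by
  refine le_antisymm ?_ ?_
  · exact le_iInf₂ fun u _ =>
      (gdist_triangle w v u a).trans (add_le_add (gdist_le_shortcutDist w r v u) le_rfl)
  · rw [gdist_of_ne w hav.symm]
    exact le_iInf (iInf_shortcutDist_add_gdist_le_pathCost hS hsep hav ha)

end Separator

end TopDownLabels

open TopDownLabels

theorem top_down_distance_labels_correct_general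
    {V : Type*} [Fintype V] [DecidableEq V]
    (w : V → V → ℝ≥0∞) (hsymm : ∀ u v, w u v = w v u)
    (r : V → ℕ)
    (N : V → Finset V)
    (anc : V → V → Prop)   -- `anc v a`: `a` is a (strict) ancestor of `v` in the tree
    (hNanc : ∀ v, ∀ u ∈ N v, anc v u)
    (hancrank : ∀ v a, anc v a → r v < r a)
    -- ancestors of a vertex are linearly ordered by the ancestor relation
    (hlinear : ∀ v x y, anc v x → anc v y → (x = y ∨ anc x y ∨ anc y x))
    -- separation: every finite-cost walk from `v` to a non-descendant `a` meets `N v`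
    (hsep : ∀ v a, ¬ (a = v ∨ anc a v) → ∀ p : List V,
      pathCost w v p a ≠ ⊤ → ∃ b ∈ p ++ [a], b ∈ N v)
    -- shortcut weights: shortest `v`–`u` distance among paths internal to ranks below `r v`
    (sc : V → V → ℝ≥0∞)
    (hsc : ∀ v u, sc v u =
      ⨅ (p : List V), ⨅ (_ : ∀ x ∈ p, r x < r v), pathCost w v p u)
    -- the top-down computed labels
    (X : V → V → ℝ≥0∞)
    (hXbase : ∀ v, X v v = 0)
    (hXsymm : ∀ u a, X u a = X a u)
    (hXrec : ∀ v a, anc v a →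
      X v a = ⨅ u ∈ (N v : Set V), sc v u + X u a) :
    ∀ v a, anc v a → X v a = gdist w v a := by
  have hwf : WellFounded fun u v => anc v u := wellFounded_of_rank_lt r fun u v => hancrank v u
  refine fun v => hwf.induction (C := fun v => ∀ a, anc v a → X v a = gdist w v a) v
    fun v ih a hva => ?_
  have hXN : ∀ u ∈ N v, X u a = gdist w u a := by
    intro u hu
    rcases hlinear v u a (hNanc v u hu) hva with rfl | hua | hau
    · simp [hXbase]
    · exact ih u (hNanc v u hu) a hua
    · rw [hXsymm, gdist_comm w hsymm]
      exact ih a hva u hau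
  have hrank : ¬ r a < r v := not_lt.mpr (hancrank v a hva).le
  rw [hXrec v a hva, gdist_eq_iInf_shortcutDist_add_gdist (S := N v)
    (fun u hu => (hancrank v u (hNanc v u hu)).le)
    (fun b hbv hb => hsep v b fun h => h.elim hbv fun hbv => hb (hancrank b v hbv))
    (by rintro rfl; exact hrank (hancrank a a hva)) hrank]
  exact iInf_congr fun u => iInf_congr fun hu => by rw [hXN u hu, hsc, shortcutDist]

/-- Distance-array correctness of the separator-based top-down construction: in an
elimination tree where each vertex `v` has its elimination-time neighbor set `N v` among its
ancestors, `N v` separates `v` from every non-descendant, and the shortcut weights are the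
lengths of shortest paths internal to lower-ranked vertices, the top-down recursion
`X v a = min over u ∈ N v of (sc v u + X u a)` computes `X v a = d_G(v,a)` for every vertex
`v` and every ancestor `a` of `v`. -/
theorem top_down_distance_labels_correct
    {V : Type*} [Fintype V] [DecidableEq V]
    (w : V → V → ℝ≥0∞) (hsymm : ∀ u v, w u v = w v u)
    (r : V → ℕ) (hinj : Function.Injective r)
    (N : V → Finset V)
    (anc : V → V → Prop)   -- `anc v a`: `a` is a (strict) ancestor of `v` in the tree
    (hNanc : ∀ v, ∀ u ∈ N v, anc v u)
    (hancrank : ∀ v a, anc v a → r v < r a)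
    (hanctrans : ∀ v a b, anc v a → anc a b → anc v b)
    -- ancestors of a vertex are linearly ordered by the ancestor relation
    (hlinear : ∀ v x y, anc v x → anc v y → (x = y ∨ anc x y ∨ anc y x))
    -- separation: every finite-cost walk from `v` to a non-descendant `a` meets `N v`
    (hsep : ∀ v a, ¬ (a = v ∨ anc a v) → ∀ p : List V,
      pathCost w v p a ≠ ⊤ → ∃ b ∈ p ++ [a], b ∈ N v)
    -- shortcut weights: shortest `v`–`u` distance among paths internal to ranks below `r v`
    (sc : V → V → ℝ≥0∞)
    (hsc : ∀ v u, sc v u =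
      ⨅ (p : List V), ⨅ (_ : ∀ x ∈ p, r x < r v), pathCost w v p u)
    -- the top-down computed labels
    (X : V → V → ℝ≥0∞)
    (hXbase : ∀ v, X v v = 0)
    (hXsymm : ∀ u a, X u a = X a u)
    (hXrec : ∀ v a, anc v a →
      X v a = ⨅ u ∈ (N v : Set V), sc v u + X u a) :
    ∀ v a, anc v a → X v a = gdist w v a :=
  top_down_distance_labels_correct_general w hsymm r N anc hNanc hancrank hlinear hsep sc hsc X
    hXbase hXsymm hXrec
end
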